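/- arXiv:2504.01926 — 2 statements merged into one kernel-verified Lean document; each statement's English description precedes it below -/
import Mathlib

section
/- Let R → S be a faithfully flat homomorphism of commutative rings of characteristic p. Then the induced ring homomorphism R^perf → S^perf between the perfections is also faithfully flat (i.e. S^perf is a faithfully flat module over R^perf via this map). -/
/-!
Every finite family of elements of a perfection `K^perf` comes from `K` through a single stage
`x ↦ x ^ (1 / p ^ N)` of the colimit, and an identity between such images holds in `K` itself
after raising to a `p`-power. Hence a relation `∑ aᵢ xᵢ = 0` (or `= 1`) over `R^perf` lifts to an
exact relation in `S`. Flatness of `S` over `R` trivialises it there (equational criterion), and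
faithful flatness makes the ideal it generates in `R` the unit ideal; pushing this back through
the stage-`N` maps gives the same over the perfections.
-/

open Filter

namespace PerfectClosure

section Stage

variable (K : Type*) [CommRing K] (p : ℕ) [Fact p.Prime] [CharP K p]

theorem mk_eq_mk_add_pow (m n : ℕ) (x : K) : mk K p (n, x) = mk K p (m + n, x ^ p ^ m) :=
  R.sound K p m n x _ (iterate_frobenius p m x)

theorem mk_mul_mk_same (n : ℕ) (x y : K) :
    mk K p (n, x) * mk K p (n, y) = mk K p (n, x * y) := by
  rw [mk_mul_mk, mk_eq_mk_add_pow K p n n (x * y)]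
  simp only [iterate_frobenius, mul_pow]

theorem mk_add_mk_same (n : ℕ) (x y : K) :
    mk K p (n, x) + mk K p (n, y) = mk K p (n, x + y) := by
  rw [mk_add_mk, mk_eq_mk_add_pow K p n n (x + y), ← iterate_frobenius, iterate_map_add]

/-- `x ↦ x ^ (1 / p ^ n)`, the `n`-th structure map of the colimit defining the perfection. -/
def mkRingHom (n : ℕ) : K →+* PerfectClosure K p where
  toFun x := mk K p (n, x)
  map_one' := by rw [one_def, mk_eq_mk_add_pow K p n 0, one_pow, add_zero]
  map_mul' x y := (mk_mul_mk_same K p n x y).symm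
  map_zero' := mk_zero_right K p n
  map_add' x y := (mk_add_mk_same K p n x y).symm

@[simp]
theorem mkRingHom_apply (n : ℕ) (x : K) : mkRingHom K p n x = mk K p (n, x) := rfl

theorem of_eq_mkRingHom (n : ℕ) (x : K) : of K p x = mkRingHom K p n (x ^ p ^ n) := by
  rw [of_apply, mk_eq_mk_add_pow K p n 0, add_zero, mkRingHom_apply]

theorem mkRingHom_add_pow (m n : ℕ) (x : K) :
    mkRingHom K p (m + n) (x ^ p ^ m) = mkRingHom K p n x :=
  (mk_eq_mk_add_pow K p m n x).symm

theorem mkRingHom_eq_mkRingHom_iff (n : ℕ) (x y : K) :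
    mkRingHom K p n x = mkRingHom K p n y ↔ ∃ m, x ^ p ^ m = y ^ p ^ m := by
  refine ⟨fun h => ?_, fun ⟨m, h⟩ => by rw [← mkRingHom_add_pow K p m, h, mkRingHom_add_pow]⟩
  obtain ⟨m, hm⟩ := (mk_eq_iff K p _ _).1 h
  exact ⟨n + m, by simpa only [iterate_frobenius] using hm⟩

theorem eventually_exists_mkRingHom_eq (x : PerfectClosure K p) :
    ∀ᶠ n in atTop, ∃ r, mkRingHom K p n r = x := by
  obtain ⟨⟨m, r⟩, rfl⟩ := mk_surjective K p x
  filter_upwards [eventually_ge_atTop m] with n hn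
  refine ⟨r ^ p ^ (n - m), ?_⟩
  rw [← Nat.sub_add_cancel hn, Nat.add_sub_cancel, mkRingHom_add_pow, mkRingHom_apply]

theorem eventually_exists_forall_mkRingHom_eq {ι : Type*} [Finite ι]
    (x : ι → PerfectClosure K p) :
    ∀ᶠ n in atTop, ∃ r : ι → K, ∀ i, mkRingHom K p n (r i) = x i := by
  simpa only [Classical.skolem] using
    eventually_all.2 fun i => eventually_exists_mkRingHom_eq K p (x i)

end Stage

variable {R S : Type*} [CommRing R] [CommRing S] {p : ℕ} [Fact p.Prime] [CharP R p] [CharP S p]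
  {f : R →+* S} {g : PerfectClosure R p →+* PerfectClosure S p}

theorem map_mkRingHom_of_comp_of_eq (hg : g.comp (of R p) = (of S p).comp f) (n : ℕ) (x : R) :
    g (mkRingHom R p n x) = mkRingHom S p n (f x) := by
  apply (injective_frobenius (PerfectClosure S p) p).iterate n
  simp only [mkRingHom_apply, ← g.map_iterate_frobenius, iterate_frobenius_mk]
  exact RingHom.congr_fun hg x

theorem exists_mkRingHom_sum_mul_eq_pow (hg : g.comp (of R p) = (of S p).comp f) {ι : Type*}
    [Fintype ι] (a : ι → PerfectClosure R p) (x : ι → PerfectClosure S p) (c : S)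
    (h : ∑ i, g (a i) * x i = of S p c) :
    ∃ (N : ℕ) (r : ι → R) (s : ι → S), (∀ i, mkRingHom R p N (r i) = a i) ∧
      (∀ i, mkRingHom S p N (s i) = x i) ∧ ∑ i, f (r i) * s i = c ^ p ^ N := by
  obtain ⟨N, ⟨r, hr⟩, ⟨s, hs⟩⟩ := ((eventually_exists_forall_mkRingHom_eq R p a).and
    (eventually_exists_forall_mkRingHom_eq S p x)).exists
  have hN : mkRingHom S p N (∑ i, f (r i) * s i) = mkRingHom S p N (c ^ p ^ N) := by
    simp only [map_sum, map_mul, ← map_mkRingHom_of_comp_of_eq hg, hr, hs, h, of_eq_mkRingHom S p N]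
  obtain ⟨m, hm⟩ := (mkRingHom_eq_mkRingHom_iff S p N _ _).1 hN
  refine ⟨m + N, fun i => r i ^ p ^ m, fun i => s i ^ p ^ m, fun i => ?_, fun i => ?_, ?_⟩
  · rw [mkRingHom_add_pow, hr]
  · rw [mkRingHom_add_pow, hs]
  · simp only [map_pow, ← mul_pow, ← sum_pow_char_pow, hm, ← pow_mul, ← pow_add, add_comm N m]

theorem _root_.RingHom.Flat.perfectClosure (hf : f.Flat)
    (hg : g.comp (of R p) = (of S p).comp f) : g.Flat := by
  algebraize [f, g]
  refine Module.Flat.of_forall_isTrivialRelation fun {l a x} h => ?_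
  obtain ⟨N, r, s, hr, hs, hrs⟩ := exists_mkRingHom_sum_mul_eq_pow hg a x 0 (by
    simpa only [Algebra.smul_def, RingHom.algebraMap_toAlgebra, map_zero] using h)
  rw [zero_pow (pow_ne_zero N (Fact.out : p.Prime).ne_zero)] at hrs
  obtain ⟨k, b, t, hst, hrb⟩ :=
    Module.Flat.isTrivialRelation_of_sum_smul_eq_zero (R := R) (M := S) hrs
  refine ⟨k, fun i j => mkRingHom R p N (b i j), fun j => mkRingHom S p N (t j),
    fun i => ?_, fun j => ?_⟩
  · simp only [← hs i, hst i, map_sum, Algebra.smul_def, map_mul,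
      RingHom.algebraMap_toAlgebra, map_mkRingHom_of_comp_of_eq hg]
  · simp only [← hr, ← map_mul, ← map_sum, hrb j, map_zero]

theorem _root_.RingHom.FaithfullyFlat.perfectClosure (hf : f.FaithfullyFlat)
    (hg : g.comp (of R p) = (of S p).comp f) : g.FaithfullyFlat := by
  have hflat := hf.flat.perfectClosure hg
  algebraize [f, g]
  refine (Module.FaithfullyFlat.iff_flat_and_ideal_smul_eq_top _ _).2 ⟨hflat, fun I hI => ?_⟩
  rw [Ideal.smul_top_eq_map, Submodule.restrictScalars_eq_top_iff, Ideal.eq_top_iff_one] at hI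
  obtain ⟨l, x, y, hxy⟩ := Submodule.mem_span_set'.1 hI
  choose a haI hay using fun i => (y i).2
  obtain ⟨N, r, s, hr, -, hrs⟩ := exists_mkRingHom_sum_mul_eq_pow hg a x 1 (by
    simpa only [map_one, smul_eq_mul, ← hay, RingHom.algebraMap_toAlgebra, mul_comm] using hxy)
  rw [one_pow] at hrs
  have hJ : Ideal.span (Set.range r) = ⊤ := by
    rw [← Ideal.comap_map_eq_self_of_faithfullyFlat (B := S) (Ideal.span (Set.range r)),
      Ideal.eq_top_iff_one, Ideal.mem_comap, map_one, RingHom.algebraMap_toAlgebra, ← hrs]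
    exact Ideal.sum_mem _ fun i _ =>
      Ideal.mul_mem_right _ _ (Ideal.mem_map_of_mem _ (Ideal.subset_span ⟨i, rfl⟩))
  rw [eq_top_iff, ← Ideal.map_top (mkRingHom R p N), ← hJ, Ideal.map_span, Ideal.span_le]
  rintro _ ⟨_, ⟨i, rfl⟩, rfl⟩
  exact hr i ▸ haI i

end PerfectClosure

theorem stmt_2_general (p : ℕ) [Fact p.Prime]
    (R : Type) [CommRing R] [CharP R p] (S : Type) [CommRing S] [CharP S p]
    (f : R →+* S)
    (hff : letI := f.toAlgebra; Module.FaithfullyFlat R S) :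
    letI := ((PerfectClosure.lift R p (PerfectClosure S p))
      ((PerfectClosure.of S p).comp f)).toAlgebra
    Module.FaithfullyFlat (PerfectClosure R p) (PerfectClosure S p) :=
  RingHom.FaithfullyFlat.perfectClosure hff
    ((PerfectClosure.lift R p (PerfectClosure S p)).symm_apply_apply _)

/-- Let `R → S` be a faithfully flat homomorphism of commutative rings of
characteristic `p`.  Then the induced ring homomorphism `R^perf → S^perf` between the perfections
(perfect closures) is faithfully flat, i.e. `S^perf` is a faithfully flat `R^perf`-module via this
map.  The induced map is the unique one commuting with the canonical maps, obtained by lifting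
`R → S → S^perf` along `R → R^perf` using the universal property of the perfection. -/
theorem stmt_2 (p : ℕ) [Fact p.Prime] (e : ℕ) (he : 0 < e) (q : ℕ) (hq : q = p ^ e)
    (R : Type) [CommRing R] [CharP R p] (S : Type) [CommRing S] [CharP S p]
    (f : R →+* S)
    (hff : letI := f.toAlgebra; Module.FaithfullyFlat R S) :
    letI := ((PerfectClosure.lift R p (PerfectClosure S p))
      ((PerfectClosure.of S p).comp f)).toAlgebra
    Module.FaithfullyFlat (PerfectClosure R p) (PerfectClosure S p) :=
  stmt_2_general p R S f hff
end

section
/- In the ring R[τ,τ⁻¹] the following hold (writing ā for the image in R[τ,τ⁻¹] of a ∈ R): (1) for every a ∈ R and all integers i, j ≥ 0, one has σ^j·ā·τ^i = σ^{j+1}·(a^q)‾·τ^{i+1}; (2) every element of R[τ,τ⁻¹] can be written in the form σ^n·(ā₀ + ā₁τ + ⋯ + ā_m τ^m) for suitable natural numbers n, m and coefficients a₀, …, a_m ∈ R; (3) every nilpotent element of R is sent to 0 by the canonical map R → R[τ,τ⁻¹]. -/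
/-! Construction of the twisted Laurent polynomial ring `R[τ,τ⁻¹]` as the quotient of the free
noncommutative `𝔽`-algebra on the set `R ⊔ {τ, σ}` by the relations making the canonical map
`R → R[τ,τ⁻¹]` an `𝔽`-algebra homomorphism, together with `τ·a = a^q·τ`, `σ·a^q = a·σ` and
`τσ = στ = 1` for all `a ∈ R`. -/

namespace TwistedLaurent

/-- Generators: the elements of `R`, and the two formal variables `τ` and `σ`. -/
inductive Gen (R : Type) : Type
  | base : R → Gen R
  | tau : Gen R
  | sigma : Gen R

/-- The defining relations of `R[τ,τ⁻¹]`. -/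
inductive Rel (q : ℕ) (𝔽 R : Type) [Field 𝔽] [CommRing R] [Algebra 𝔽 R] :
    FreeAlgebra 𝔽 (Gen R) → FreeAlgebra 𝔽 (Gen R) → Prop
  | add (a b : R) : Rel q 𝔽 R (FreeAlgebra.ι 𝔽 (Gen.base (a + b)))
      (FreeAlgebra.ι 𝔽 (Gen.base a) + FreeAlgebra.ι 𝔽 (Gen.base b))
  | mul (a b : R) : Rel q 𝔽 R (FreeAlgebra.ι 𝔽 (Gen.base (a * b)))
      (FreeAlgebra.ι 𝔽 (Gen.base a) * FreeAlgebra.ι 𝔽 (Gen.base b))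
  | algebra (c : 𝔽) : Rel q 𝔽 R (FreeAlgebra.ι 𝔽 (Gen.base (algebraMap 𝔽 R c)))
      (algebraMap 𝔽 (FreeAlgebra 𝔽 (Gen R)) c)
  | tau_comm (a : R) : Rel q 𝔽 R (FreeAlgebra.ι 𝔽 Gen.tau * FreeAlgebra.ι 𝔽 (Gen.base a))
      (FreeAlgebra.ι 𝔽 (Gen.base (a ^ q)) * FreeAlgebra.ι 𝔽 Gen.tau)
  | sigma_comm (a : R) : Rel q 𝔽 R (FreeAlgebra.ι 𝔽 Gen.sigma * FreeAlgebra.ι 𝔽 (Gen.base (a ^ q)))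
      (FreeAlgebra.ι 𝔽 (Gen.base a) * FreeAlgebra.ι 𝔽 Gen.sigma)
  | tau_sigma : Rel q 𝔽 R (FreeAlgebra.ι 𝔽 Gen.tau * FreeAlgebra.ι 𝔽 Gen.sigma) 1
  | sigma_tau : Rel q 𝔽 R (FreeAlgebra.ι 𝔽 Gen.sigma * FreeAlgebra.ι 𝔽 Gen.tau) 1

variable (q : ℕ) (𝔽 R : Type) [Field 𝔽] [CommRing R] [Algebra 𝔽 R]

/-- The twisted Laurent polynomial ring `R[τ,τ⁻¹]`. -/
def Ring' : Type := RingQuot (Rel q 𝔽 R)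

noncomputable instance : Ring (Ring' q 𝔽 R) :=
  inferInstanceAs (Ring (RingQuot (Rel q 𝔽 R)))

/-- The canonical map `R → R[τ,τ⁻¹]`. -/
noncomputable def ι : R → Ring' q 𝔽 R :=
  fun a => RingQuot.mkAlgHom 𝔽 (Rel q 𝔽 R) (FreeAlgebra.ι 𝔽 (Gen.base a))

/-- The element `τ` of `R[τ,τ⁻¹]`. -/
noncomputable def T : Ring' q 𝔽 R :=
  RingQuot.mkAlgHom 𝔽 (Rel q 𝔽 R) (FreeAlgebra.ι 𝔽 Gen.tau)

/-- The element `σ` of `R[τ,τ⁻¹]`. -/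
noncomputable def S : Ring' q 𝔽 R :=
  RingQuot.mkAlgHom 𝔽 (Rel q 𝔽 R) (FreeAlgebra.ι 𝔽 Gen.sigma)

end TwistedLaurent

/-!
Since `σ·τ = 1`, the relation `σ·(a^q)‾ = ā·σ` gives `ā = σ·(a^q)‾·τ`, and iterating gives
`ā = σ^k·(a^(q^k))‾·τ^k`; when `a` is nilpotent and `q ≥ 2`, `a^(q^k) = 0` for large `k`.

For the normal form, the monomials `ā·τ^k` form a multiplicative monoid, so their additive span
`P` is a subsemiring. Conjugation `y ↦ τ·y·σ` maps `P` into itself, which lets one move powers of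
`σ` to the left: `y·σ^n = σ^n·(τ^n·y·σ^n)`. Hence the elements `σ^n·y` with `y ∈ P` are closed
under sums and products, and they contain the generators `ā`, `τ`, `σ`.
-/

namespace TwistedLaurent

open Polynomial

variable {q : ℕ} {𝔽 R : Type} [Field 𝔽] [CommRing R] [Algebra 𝔽 R]

local notation "τ" => T q 𝔽 R
local notation "σ" => S q 𝔽 R

variable (q 𝔽 R) in
noncomputable def mk : FreeAlgebra 𝔽 (Gen R) →+* Ring' q 𝔽 R :=
  (RingQuot.mkAlgHom 𝔽 (Rel q 𝔽 R)).toRingHom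

theorem mk_surjective : Function.Surjective (mk q 𝔽 R) :=
  RingQuot.mkAlgHom_surjective 𝔽 _

theorem mk_rel {x y : FreeAlgebra 𝔽 (Gen R)} (h : Rel q 𝔽 R x y) :
    mk q 𝔽 R x = mk q 𝔽 R y :=
  RingQuot.mkAlgHom_rel 𝔽 h

theorem mk_ι_base (a : R) : mk q 𝔽 R (FreeAlgebra.ι 𝔽 (Gen.base a)) = ι q 𝔽 R a :=
  rfl

theorem mk_ι_tau : mk q 𝔽 R (FreeAlgebra.ι 𝔽 Gen.tau) = τ :=
  rfl

theorem mk_ι_sigma : mk q 𝔽 R (FreeAlgebra.ι 𝔽 Gen.sigma) = σ :=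
  rfl

theorem ι_add (a b : R) : ι q 𝔽 R (a + b) = ι q 𝔽 R a + ι q 𝔽 R b := by
  simpa only [map_add, mk_ι_base] using mk_rel (Rel.add (q := q) (𝔽 := 𝔽) a b)

theorem ι_mul (a b : R) : ι q 𝔽 R (a * b) = ι q 𝔽 R a * ι q 𝔽 R b := by
  simpa only [map_mul, mk_ι_base] using mk_rel (Rel.mul (q := q) (𝔽 := 𝔽) a b)

theorem ι_one : ι q 𝔽 R 1 = 1 := by
  simpa only [map_one, mk_ι_base] using mk_rel (Rel.algebra (q := q) (R := R) (1 : 𝔽))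

theorem ι_zero : ι q 𝔽 R 0 = 0 := by
  simpa only [add_zero, left_eq_add] using ι_add (q := q) (𝔽 := 𝔽) (0 : R) 0

theorem T_mul_ι (a : R) : τ * ι q 𝔽 R a = ι q 𝔽 R (a ^ q) * τ := by
  simpa only [map_mul, mk_ι_base, mk_ι_tau] using mk_rel (Rel.tau_comm (q := q) (𝔽 := 𝔽) a)

theorem S_mul_ι_pow (a : R) : σ * ι q 𝔽 R (a ^ q) = ι q 𝔽 R a * σ := by
  simpa only [map_mul, mk_ι_base, mk_ι_sigma] using
    mk_rel (Rel.sigma_comm (q := q) (𝔽 := 𝔽) a)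

theorem T_mul_S : τ * σ = 1 := by
  simpa only [map_mul, map_one, mk_ι_tau, mk_ι_sigma] using
    mk_rel (Rel.tau_sigma (q := q) (𝔽 := 𝔽) (R := R))

theorem S_mul_T : σ * τ = 1 := by
  simpa only [map_mul, map_one, mk_ι_tau, mk_ι_sigma] using
    mk_rel (Rel.sigma_tau (q := q) (𝔽 := 𝔽) (R := R))

theorem commute_S_T : Commute σ τ :=
  S_mul_T.trans T_mul_S.symm

theorem S_pow_mul_T_pow (n : ℕ) : σ ^ n * τ ^ n = 1 := by
  rw [← commute_S_T.mul_pow, S_mul_T, one_pow]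

theorem ι_eq_S_mul_ι_pow_mul_T (a : R) : ι q 𝔽 R a = σ * ι q 𝔽 R (a ^ q) * τ := by
  rw [S_mul_ι_pow, mul_assoc, S_mul_T, mul_one]

theorem ι_eq_S_pow_mul_ι_pow_mul_T_pow (a : R) (n : ℕ) :
    ι q 𝔽 R a = σ ^ n * ι q 𝔽 R (a ^ q ^ n) * τ ^ n := by
  induction n with
  | zero => simp only [pow_zero, pow_one, one_mul, mul_one]
  | succ n ih =>
    rw [ih, ι_eq_S_mul_ι_pow_mul_T (a ^ q ^ n), ← pow_mul, ← pow_succ, pow_succ σ,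
      pow_succ' τ]
    simp only [mul_assoc]

theorem ι_eq_zero_of_isNilpotent (hq : 1 < q) {a : R} (ha : IsNilpotent a) :
    ι q 𝔽 R a = 0 := by
  obtain ⟨n, hn⟩ := ha
  have h : a ^ q ^ n = 0 := pow_eq_zero_of_le (Nat.lt_pow_self hq).le hn
  rw [ι_eq_S_pow_mul_ι_pow_mul_T_pow a n, h, ι_zero, mul_zero, zero_mul]

theorem T_pow_mul_ι (a : R) (n : ℕ) :
    τ ^ n * ι q 𝔽 R a = ι q 𝔽 R (a ^ q ^ n) * τ ^ n := by
  induction n generalizing a with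
  | zero => simp only [pow_zero, pow_one, one_mul, mul_one]
  | succ n ih =>
    rw [pow_succ τ, mul_assoc, T_mul_ι, ← mul_assoc, ih, ← pow_mul, ← pow_succ', mul_assoc]

variable (q 𝔽 R) in
noncomputable def monomials : Submonoid (Ring' q 𝔽 R) where
  carrier := {x | ∃ (a : R) (k : ℕ), ι q 𝔽 R a * τ ^ k = x}
  one_mem' := ⟨1, 0, by rw [ι_one, pow_zero, one_mul]⟩
  mul_mem' := by
    rintro _ _ ⟨a, i, rfl⟩ ⟨b, j, rfl⟩
    refine ⟨a * b ^ q ^ i, i + j, ?_⟩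
    rw [mul_assoc (ι q 𝔽 R a), ← mul_assoc (τ ^ i), T_pow_mul_ι, ι_mul, pow_add]
    simp only [mul_assoc]

variable (q 𝔽 R) in
noncomputable def polynomials : Subsemiring (Ring' q 𝔽 R) :=
  (monomials q 𝔽 R).subsemiringClosure

theorem ι_mul_T_pow_mem_polynomials (a : R) (k : ℕ) :
    ι q 𝔽 R a * τ ^ k ∈ polynomials q 𝔽 R :=
  AddSubmonoid.subset_closure ⟨a, k, rfl⟩

theorem ι_mem_polynomials (a : R) : ι q 𝔽 R a ∈ polynomials q 𝔽 R := by
  simpa only [pow_zero, mul_one] using ι_mul_T_pow_mem_polynomials (q := q) (𝔽 := 𝔽) a 0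

theorem T_mem_polynomials : τ ∈ polynomials q 𝔽 R := by
  simpa only [ι_one, pow_one, one_mul] using
    ι_mul_T_pow_mem_polynomials (q := q) (𝔽 := 𝔽) (1 : R) 1

theorem exists_eq_sum_of_mem_polynomials {y : Ring' q 𝔽 R} (hy : y ∈ polynomials q 𝔽 R) :
    ∃ f : R[X], y = f.sum fun i a => ι q 𝔽 R a * τ ^ i := by
  have hzero (i : ℕ) : ι q 𝔽 R 0 * τ ^ i = 0 := by rw [ι_zero, zero_mul]
  induction hy using AddSubmonoid.closure_induction with
  | mem _ hx =>
    obtain ⟨a, k, rfl⟩ := hx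
    exact ⟨monomial k a, by rw [sum_monomial_index a _ (hzero k)]⟩
  | zero => exact ⟨0, (sum_zero_index _).symm⟩
  | add _ _ _ _ hx hy =>
    obtain ⟨f, rfl⟩ := hx
    obtain ⟨g, rfl⟩ := hy
    refine ⟨f + g, (sum_add_index f g _ hzero fun i a b => ?_).symm⟩
    rw [ι_add, add_mul]

theorem T_mul_mul_S_mem_polynomials {y : Ring' q 𝔽 R} (hy : y ∈ polynomials q 𝔽 R) :
    τ * y * σ ∈ polynomials q 𝔽 R := by
  induction hy using AddSubmonoid.closure_induction with
  | mem _ hx =>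
    obtain ⟨a, k, rfl⟩ := hx
    have h : τ * (ι q 𝔽 R a * τ ^ k) * σ = ι q 𝔽 R (a ^ q) * τ ^ k := by
      rw [← mul_assoc, T_mul_ι, mul_assoc _ τ, ← pow_succ', mul_assoc, pow_succ, mul_assoc,
        T_mul_S, mul_one]
    exact h ▸ ι_mul_T_pow_mem_polynomials _ _
  | zero => simpa only [mul_zero, zero_mul] using (polynomials q 𝔽 R).zero_mem
  | add _ _ _ _ hx hy => simpa only [mul_add, add_mul] using add_mem hx hy

theorem T_pow_mul_mul_S_pow_mem_polynomials {y : Ring' q 𝔽 R} (hy : y ∈ polynomials q 𝔽 R)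
    (n : ℕ) : τ ^ n * y * σ ^ n ∈ polynomials q 𝔽 R := by
  induction n with
  | zero => simpa only [pow_zero, one_mul, mul_one] using hy
  | succ n ih =>
    rw [pow_succ' τ, pow_succ σ]
    simpa only [mul_assoc] using T_mul_mul_S_mem_polynomials ih

theorem mul_S_pow_eq (y : Ring' q 𝔽 R) (n : ℕ) :
    y * σ ^ n = σ ^ n * (τ ^ n * y * σ ^ n) := by
  rw [← mul_assoc, ← mul_assoc, S_pow_mul_T_pow, one_mul]

theorem S_pow_mul_eq (y : Ring' q 𝔽 R) (n k : ℕ) :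
    σ ^ n * y = σ ^ (n + k) * (τ ^ k * y) := by
  rw [pow_add, mul_assoc, ← mul_assoc (σ ^ k), S_pow_mul_T_pow, one_mul]

theorem exists_eq_S_pow_mul (x : Ring' q 𝔽 R) :
    ∃ n, ∃ y ∈ polynomials q 𝔽 R, x = σ ^ n * y := by
  obtain ⟨x, rfl⟩ := mk_surjective x
  induction x using FreeAlgebra.induction with
  | grade0 c =>
    refine ⟨0, _, ι_mem_polynomials (algebraMap 𝔽 R c), ?_⟩
    rw [pow_zero, one_mul, ← mk_rel (Rel.algebra c), mk_ι_base]
  | grade1 g =>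
    cases g with
    | base a => exact ⟨0, _, ι_mem_polynomials a, by rw [pow_zero, one_mul, mk_ι_base]⟩
    | tau => exact ⟨0, _, T_mem_polynomials, by rw [pow_zero, one_mul, mk_ι_tau]⟩
    | sigma => exact ⟨1, 1, one_mem _, by rw [pow_one, mul_one, mk_ι_sigma]⟩
  | mul _ _ ihx ihy =>
    obtain ⟨m, y, hy, hx⟩ := ihx
    obtain ⟨n, z, hz, hz'⟩ := ihy
    refine ⟨m + n, _, mul_mem (T_pow_mul_mul_S_pow_mem_polynomials hy n) hz, ?_⟩
    rw [map_mul, hx, hz', mul_assoc, ← mul_assoc y, mul_S_pow_eq y n, pow_add]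
    simp only [mul_assoc]
  | add _ _ ihx ihy =>
    obtain ⟨m, y, hy, hx⟩ := ihx
    obtain ⟨n, z, hz, hz'⟩ := ihy
    refine ⟨m + n, _, add_mem (mul_mem (pow_mem T_mem_polynomials n) hy)
      (mul_mem (pow_mem T_mem_polynomials m) hz), ?_⟩
    rw [map_add, hx, hz', S_pow_mul_eq y m n, S_pow_mul_eq z n m, add_comm n m, mul_add]

end TwistedLaurent

open TwistedLaurent in
theorem stmt_3_general (q : ℕ)
    (𝔽 : Type) [Field 𝔽] [Fintype 𝔽] (hcard : Fintype.card 𝔽 = q)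
    (R : Type) [CommRing R] [Algebra 𝔽 R] :
    (∀ (a : R) (i j : ℕ),
        S q 𝔽 R ^ j * ι q 𝔽 R a * T q 𝔽 R ^ i
          = S q 𝔽 R ^ (j + 1) * ι q 𝔽 R (a ^ q) * T q 𝔽 R ^ (i + 1)) ∧
    (∀ x : Ring' q 𝔽 R, ∃ (n m : ℕ) (c : ℕ → R),
        x = S q 𝔽 R ^ n * ∑ i ∈ Finset.range (m + 1), ι q 𝔽 R (c i) * T q 𝔽 R ^ i) ∧
    (∀ a : R, IsNilpotent a → ι q 𝔽 R a = 0) := by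
  refine ⟨fun a i j => ?_, fun x => ?_, fun a => ι_eq_zero_of_isNilpotent ?_⟩
  · rw [ι_eq_S_mul_ι_pow_mul_T a, pow_succ, pow_succ']
    simp only [mul_assoc]
  · obtain ⟨n, y, hy, rfl⟩ := exists_eq_S_pow_mul x
    obtain ⟨f, rfl⟩ := exists_eq_sum_of_mem_polynomials hy
    refine ⟨n, f.natDegree, f.coeff, ?_⟩
    rw [Polynomial.sum_over_range]
    intro i
    rw [ι_zero, zero_mul]
  · exact hcard ▸ Fintype.one_lt_card

open TwistedLaurent in
/-- Let `𝔽` be the finite field with `q` elements (`q` a power of a prime `p`)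
and `R` a commutative `𝔽`-algebra.  In the ring `R[τ,τ⁻¹]`: (1) for every `a ∈ R` and all
`i, j ≥ 0` one has `σ^j·ā·τ^i = σ^(j+1)·(a^q)‾·τ^(i+1)`; (2) every element can be written as
`σ^n·(ā₀ + ā₁τ + ⋯ + ā_m τ^m)` for suitable `n, m ∈ ℕ` and coefficients `a₀, …, a_m ∈ R`;
(3) every nilpotent element of `R` is sent to `0` by the canonical map `R → R[τ,τ⁻¹]`. -/
theorem stmt_3 (p : ℕ) (hp : p.Prime) (e : ℕ) (he : 0 < e) (q : ℕ) (hq : q = p ^ e)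
    (𝔽 : Type) [Field 𝔽] [Fintype 𝔽] (hcard : Fintype.card 𝔽 = q)
    (R : Type) [CommRing R] [Algebra 𝔽 R] :
    (∀ (a : R) (i j : ℕ),
        S q 𝔽 R ^ j * ι q 𝔽 R a * T q 𝔽 R ^ i
          = S q 𝔽 R ^ (j + 1) * ι q 𝔽 R (a ^ q) * T q 𝔽 R ^ (i + 1)) ∧
    (∀ x : Ring' q 𝔽 R, ∃ (n m : ℕ) (c : ℕ → R),
        x = S q 𝔽 R ^ n * ∑ i ∈ Finset.range (m + 1), ι q 𝔽 R (c i) * T q 𝔽 R ^ i) ∧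
    (∀ a : R, IsNilpotent a → ι q 𝔽 R a = 0) :=
  stmt_3_general q 𝔽 hcard R
end
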